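/- For every complex number m, lim_{τ→0⁺} (K₀(τ, τ; m) + 2im K₁(τ, τ; m)) = i m. -/

import Mathlib

noncomputable section
open Complex Filter

/-- The hypergeometric argument z = (τ²−r²)/((τ+2)²−r²), as a complex number. -/
def zArg (r τ : ℝ) : ℂ := (((τ ^ 2 - r ^ 2) / ((τ + 2) ^ 2 - r ^ 2) : ℝ) : ℂ)

/-- The kernel K₁(r,τ;m). -/
def K1 (F : ℂ → ℂ → ℂ → ℂ → ℂ) (m : ℂ) (r τ : ℝ) : ℂ :=
  (2 : ℂ) ^ (2 * I * m) * ((((τ + 2) ^ 2 - r ^ 2 : ℝ)) : ℂ) ^ (-(I * m))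
    * F (I * m) (I * m) 1 (zArg r τ)

/-- The kernel K₀(r,τ;m). -/
def K0 (F : ℂ → ℂ → ℂ → ℂ → ℂ) (m : ℂ) (r τ : ℝ) : ℂ :=
  -(2 : ℂ) ^ (2 * I * m) * m * ((((τ + 2) ^ 2 - r ^ 2 : ℝ)) : ℂ) ^ (-(I * m)) *
    ((2 * I * ((r ^ 2 - τ * (τ + 1) : ℝ) : ℂ) / ((r ^ 2 - τ ^ 2 : ℝ) : ℂ))
        * F (I * m) (I * m) 1 (zArg r τ)
      - (4 * I * ((τ + 1 : ℝ) : ℂ) * ((τ * (τ + 2) - r ^ 2 : ℝ) : ℂ)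
            / (((τ ^ 2 - r ^ 2 : ℝ) : ℂ) * ((((τ + 2) ^ 2 - r ^ 2 : ℝ)) : ℂ)))
        * F (I * m + 1) (I * m) 1 (zArg r τ))

/-! With `s = τ² - r²`, `B = (τ+2)² - r²` and `z = s / B`, both coefficients of `K₀` have a
simple pole at `s = 0`, but since `(B - s) / B = 1 - z` the polar parts combine into
`2iτ / B · (F(im,im;1;z) - (1 - z) F(im+1,im;1;z)) / z`, a difference quotient at `z = 0`.
So `K₀(r,τ) → K₀(τ,τ)` with that quotient replaced by the derivative
`(im)² - (im+1)im + 1 = 1 - im`. The resulting `K₀(τ,τ) + 2im K₁(τ,τ)` is continuous at `τ = 0`,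
where it equals `2^{2im} 4^{-im} im = im`. -/

open Topology

lemma two_cpow_two_mul_mul_four_cpow_neg (w : ℂ) : (2 : ℂ) ^ (2 * w) * 4 ^ (-w) = 1 := by
  rw [cpow_ofNat_mul' (by simp [Real.pi_pos]) (by simp [Real.pi_pos.le]), cpow_neg]
  norm_num

lemma K0_eq_of_ne (F : ℂ → ℂ → ℂ → ℂ → ℂ) (m : ℂ) {r τ : ℝ} (hs : τ ^ 2 - r ^ 2 ≠ 0)
    (hB : (τ + 2) ^ 2 - r ^ 2 ≠ 0) :
    K0 F m r τ = -(2 : ℂ) ^ (2 * I * m) * m * (((τ + 2) ^ 2 - r ^ 2 : ℝ) : ℂ) ^ (-(I * m)) *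
      (2 * I * F (I * m) (I * m) 1 (zArg r τ)
        - 4 * I * ((τ + 1 : ℝ) : ℂ) / (((τ + 2) ^ 2 - r ^ 2 : ℝ) : ℂ)
          * F (I * m + 1) (I * m) 1 (zArg r τ)
        + 2 * I * τ / (((τ + 2) ^ 2 - r ^ 2 : ℝ) : ℂ) * ((zArg r τ)⁻¹ *
          (F (I * m) (I * m) 1 (zArg r τ)
            - (1 - zArg r τ) * F (I * m + 1) (I * m) 1 (zArg r τ)))) := by
  have hz : zArg r τ = ((τ ^ 2 - r ^ 2 : ℝ) : ℂ) / (((τ + 2) ^ 2 - r ^ 2 : ℝ) : ℂ) := by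
    rw [zArg, ofReal_div]
  have hs' : (τ : ℂ) ^ 2 - (r : ℂ) ^ 2 ≠ 0 := by exact_mod_cast hs
  have hB' : ((τ : ℂ) + 2) ^ 2 - (r : ℂ) ^ 2 ≠ 0 := by exact_mod_cast hB
  have hrs : (r : ℂ) ^ 2 - (τ : ℂ) ^ 2 ≠ 0 := by rw [← neg_sub]; exact neg_ne_zero.mpr hs'
  rw [K0]
  generalize F (I * m) (I * m) 1 (zArg r τ) = f₁
  generalize F (I * m + 1) (I * m) 1 (zArg r τ) = f₂
  rw [hz]
  push_cast
  field_simp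
  ring

lemma eventually_sq_sub_sq_ne_zero {τ : ℝ} (hτ : 0 < τ) :
    ∀ᶠ r in 𝓝[≠] τ, τ ^ 2 - r ^ 2 ≠ 0 ∧ (τ + 2) ^ 2 - r ^ 2 ≠ 0 := by
  have hneg : ∀ᶠ r in 𝓝 τ, r ≠ -τ := eventually_ne_nhds (by linarith)
  have hB : ∀ᶠ r in 𝓝 τ, (τ + 2) ^ 2 - r ^ 2 ≠ 0 :=
    (show ContinuousAt (fun r : ℝ => (τ + 2) ^ 2 - r ^ 2) τ by fun_prop).eventually_ne
      (by nlinarith)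
  filter_upwards [self_mem_nhdsWithin, nhdsWithin_le_nhds hneg, nhdsWithin_le_nhds hB]
    with r (hr : r ≠ τ) hr_neg hBr
  refine ⟨?_, hBr⟩
  rw [show τ ^ 2 - r ^ 2 = (τ - r) * (τ + r) by ring]
  exact mul_ne_zero (sub_ne_zero.mpr hr.symm) (by grind)

lemma tendsto_zArg_nhdsNE {τ : ℝ} (hτ : 0 < τ) :
    Tendsto (fun r : ℝ => zArg r τ) (𝓝[≠] τ) (𝓝[≠] 0) := by
  refine tendsto_nhdsWithin_iff.mpr ⟨?_, ?_⟩
  · have h : ContinuousAt (fun r : ℝ => zArg r τ) τ := by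
      unfold zArg; fun_prop (disch := nlinarith)
    simpa [zArg] using h.tendsto.mono_left nhdsWithin_le_nhds
  · filter_upwards [eventually_sq_sub_sq_ne_zero hτ] with r ⟨hs, hB⟩
    exact ofReal_ne_zero.mpr (div_ne_zero hs hB)

def diagK0 (m : ℂ) (τ : ℝ) : ℂ :=
  -(2 : ℂ) ^ (2 * I * m) * m * ((4 * τ + 4 : ℝ) : ℂ) ^ (-(I * m)) *
    (2 * I - 4 * I * ((τ + 1 : ℝ) : ℂ) / ((4 * τ + 4 : ℝ) : ℂ)
      + 2 * I * τ / ((4 * τ + 4 : ℝ) : ℂ) * (1 - I * m))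

lemma tendsto_K0_nhdsNE (F : ℂ → ℂ → ℂ → ℂ → ℂ) (hF0 : ∀ a b c : ℂ, F a b c 0 = 1)
    (hF' : ∀ a b c : ℂ, HasDerivAt (F a b c) (a * b / c) 0) (m : ℂ) {τ : ℝ} (hτ : 0 < τ) :
    Tendsto (fun r : ℝ => K0 F m r τ) (𝓝[≠] τ) (𝓝 (diagK0 m τ)) := by
  set f₁ := F (I * m) (I * m) 1
  set f₂ := F (I * m + 1) (I * m) 1
  have hz := tendsto_zArg_nhdsNE hτ
  have hf (a b : ℂ) : Tendsto (fun r : ℝ => F a b 1 (zArg r τ)) (𝓝[≠] τ) (𝓝 1) := by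
    simpa [hF0, Function.comp_def] using
      (hF' a b 1).continuousAt.tendsto.comp (tendsto_nhdsWithin_iff.mp hz).1
  have hg : HasDerivAt (fun z => f₁ z - (1 - z) * f₂ z) (1 - I * m) 0 :=
    ((hF' _ _ _).sub (((hasDerivAt_id 0).const_sub 1).mul (hF' _ _ _))).congr_deriv
      (by simp [hF0]; ring)
  have hslope : Tendsto (fun z => z⁻¹ * (f₁ z - (1 - z) * f₂ z)) (𝓝[≠] 0) (𝓝 (1 - I * m)) := by
    simpa [f₁, f₂, hF0] using hasDerivAt_iff_tendsto_slope_zero.mp hg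
  have hB : Tendsto (fun r : ℝ => (((τ + 2) ^ 2 - r ^ 2 : ℝ) : ℂ)) (𝓝[≠] τ)
      (𝓝 ((4 * τ + 4 : ℝ) : ℂ)) := by
    have h : ContinuousAt (fun r : ℝ => (((τ + 2) ^ 2 - r ^ 2 : ℝ) : ℂ)) τ := by fun_prop
    convert h.tendsto.mono_left nhdsWithin_le_nhds using 2
    push_cast; ring
  have hB₀ : ((4 * τ + 4 : ℝ) : ℂ) ≠ 0 := ofReal_ne_zero.mpr (by positivity)
  have hpow : Tendsto (fun r : ℝ => (((τ + 2) ^ 2 - r ^ 2 : ℝ) : ℂ) ^ (-(I * m))) (𝓝[≠] τ)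
      (𝓝 (((4 * τ + 4 : ℝ) : ℂ) ^ (-(I * m)))) :=
    (continuousAt_cpow_const (ofReal_mem_slitPlane.mpr (by positivity))).tendsto.comp hB
  have hlim : Tendsto _ (𝓝[≠] τ)
      (𝓝 (-(2 : ℂ) ^ (2 * I * m) * m * ((4 * τ + 4 : ℝ) : ℂ) ^ (-(I * m)) *
      (2 * I * 1 - 4 * I * ((τ + 1 : ℝ) : ℂ) / ((4 * τ + 4 : ℝ) : ℂ) * 1
        + 2 * I * τ / ((4 * τ + 4 : ℝ) : ℂ) * (1 - I * m)))) :=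
    (tendsto_const_nhds.mul hpow).mul (((tendsto_const_nhds.mul (hf (I * m) (I * m))).sub
      ((tendsto_const_nhds.div hB hB₀).mul (hf (I * m + 1) (I * m)))).add
        ((tendsto_const_nhds.div hB hB₀).mul (hslope.comp hz)))
  rw [mul_one, mul_one] at hlim
  refine hlim.congr' ?_
  filter_upwards [eventually_sq_sub_sq_ne_zero hτ] with r ⟨hs, hB⟩
  exact (K0_eq_of_ne F m hs hB).symm

lemma K1_diag (F : ℂ → ℂ → ℂ → ℂ → ℂ) (hF0 : ∀ a b c : ℂ, F a b c 0 = 1) (m : ℂ) (τ : ℝ) :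
    K1 F m τ τ = (2 : ℂ) ^ (2 * I * m) * ((4 * τ + 4 : ℝ) : ℂ) ^ (-(I * m)) := by
  simp only [K1, zArg, sub_self, zero_div, ofReal_zero, hF0, mul_one]
  congr 3
  ring

lemma tendsto_diagK0_add_K1_diag (F : ℂ → ℂ → ℂ → ℂ → ℂ) (hF0 : ∀ a b c : ℂ, F a b c 0 = 1)
    (m : ℂ) :
    Tendsto (fun τ : ℝ => diagK0 m τ + 2 * I * m * K1 F m τ τ) (𝓝[>] 0) (𝓝 (I * m)) := by
  simp only [K1_diag F hF0]
  have h : ContinuousAt (fun τ : ℝ => diagK0 m τ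
      + 2 * I * m * ((2 : ℂ) ^ (2 * I * m) * ((4 * τ + 4 : ℝ) : ℂ) ^ (-(I * m)))) 0 := by
    unfold diagK0
    fun_prop (disch := first | norm_num | exact ofReal_mem_slitPlane.mpr (by norm_num))
  convert h.tendsto.mono_left nhdsWithin_le_nhds using 2
  have := two_cpow_two_mul_mul_four_cpow_neg (I * m)
  rw [← mul_assoc] at this
  norm_num [diagK0]
  linear_combination (-I * m) * this

/-- lim_{τ→0⁺} (K₀(τ,τ;m) + 2im K₁(τ,τ;m)) = im, where the diagonal value
K₀(τ,τ;m) is interpreted as the limit of K₀(r,τ;m) as r → τ⁻.  The function F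
is a Gauss hypergeometric: F(a,b;c;0) = 1 and d/dz F(a,b;c;z)|₀ = ab/c. -/
theorem K0_plus_2imK1_diagonal_limit
    (F : ℂ → ℂ → ℂ → ℂ → ℂ)
    (hF0 : ∀ a b c : ℂ, F a b c 0 = 1)
    (hF' : ∀ a b c : ℂ, HasDerivAt (F a b c) (a * b / c) 0)
    (m : ℂ) (D : ℝ → ℂ)
    (hD : ∀ τ : ℝ, 0 < τ →
      Tendsto (fun r : ℝ => K0 F m r τ) (nhdsWithin τ (Set.Iio τ)) (nhds (D τ))) :
    Tendsto (fun τ : ℝ => D τ + 2 * I * m * K1 F m τ τ)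
      (nhdsWithin 0 (Set.Ioi 0)) (nhds (I * m)) := by
  have hD_eq : ∀ τ : ℝ, 0 < τ → D τ = diagK0 m τ := fun τ hτ =>
    tendsto_nhds_unique (hD τ hτ) ((tendsto_K0_nhdsNE F hF0 hF' m hτ).mono_left
      (nhdsWithin_mono _ fun _ hr => ne_of_lt hr))
  refine (tendsto_diagK0_add_K1_diag F hF0 m).congr' ?_
  filter_upwards [self_mem_nhdsWithin] with τ (hτ : 0 < τ)
  rw [hD_eq τ hτ]
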